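/- arXiv:2401.11299 — 2 statements merged into one kernel-verified Lean document; each statement's English description precedes it below -/
import Mathlib

section
/- For M, N ∈ ⋀X: (i) if osp(N)^⊥ ∩ isp(M) ≠ {0}, then M⌟N = 0; (ii) conversely, if M ≠ 0, N ≠ 0 and M⌟N = 0, then isp(N)^⊥ ∩ osp(M) ≠ {0}. -/
/-!
Setup: `X` is a finite-dimensional real inner product space, `⋀X` its exterior
algebra.  We hypothesize a bilinear form `innE` on the exterior algebra which makes
the wedges of any orthonormal basis of `X` (over increasing index sets) orthonormal
— this characterizes the inner product of the paper — and a bilinear left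
contraction `lcontr` adjoint to the wedge product: `⟨M⌟N, L⟩ = ⟨N, M∧L⟩`.
-/

noncomputable section

open ExteriorAlgebra

/-- The wedge product `v_{i₁} ∧ ⋯ ∧ v_{i_p}` of the vectors `v i`, `i ∈ s`,
taken in increasing order of the indices. -/
def wedgeOf {X : Type*} [AddCommGroup X] [Module ℝ X] {n : ℕ}
    (v : Fin n → X) (s : Finset (Fin n)) : ExteriorAlgebra ℝ X :=
  ((s.sort (· ≤ ·)).map fun i => ι ℝ (v i)).prod

/-- The inner space `isp M = {v : v ∧ M = 0}`. -/
def isp {X : Type*} [AddCommGroup X] [Module ℝ X]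
    (M : ExteriorAlgebra ℝ X) : Submodule ℝ X where
  carrier := {x | ι ℝ x * M = 0}
  add_mem' := by
    intro a b ha hb
    simp only [Set.mem_setOf_eq, map_add, add_mul] at *
    rw [ha, hb, add_zero]
  zero_mem' := by simp
  smul_mem' := by
    intro c x hx
    simp only [Set.mem_setOf_eq, map_smul, smul_mul_assoc] at *
    rw [hx, smul_zero]

/-- The space `{v : v ⌟ M = 0}`, whose orthogonal complement is the outer space. -/
def ospKer {X : Type*} [NormedAddCommGroup X] [InnerProductSpace ℝ X]
    (lcontr : ExteriorAlgebra ℝ X →ₗ[ℝ] ExteriorAlgebra ℝ X →ₗ[ℝ] ExteriorAlgebra ℝ X)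
    (M : ExteriorAlgebra ℝ X) : Submodule ℝ X where
  carrier := {x | lcontr (ι ℝ x) M = 0}
  add_mem' := by
    intro a b ha hb
    simp only [Set.mem_setOf_eq, map_add, LinearMap.add_apply] at *
    rw [ha, hb, add_zero]
  zero_mem' := by simp
  smul_mem' := by
    intro c x hx
    simp only [Set.mem_setOf_eq, map_smul, LinearMap.smul_apply] at *
    rw [hx, smul_zero]

/-- The outer space `osp M = {v : v ⌟ M = 0}ᗮ`. -/
def osp {X : Type*} [NormedAddCommGroup X] [InnerProductSpace ℝ X]
    (lcontr : ExteriorAlgebra ℝ X →ₗ[ℝ] ExteriorAlgebra ℝ X →ₗ[ℝ] ExteriorAlgebra ℝ X)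
    (M : ExteriorAlgebra ℝ X) : Submodule ℝ X :=
  (ospKer lcontr M)ᗮ

/-- `innE` is the inner product of `⋀X`: for every orthonormal basis of `X`, the
wedges of basis vectors over increasing index sets form an orthonormal family. -/
def InnerOK {X : Type*} [NormedAddCommGroup X] [InnerProductSpace ℝ X]
    (innE : ExteriorAlgebra ℝ X →ₗ[ℝ] ExteriorAlgebra ℝ X →ₗ[ℝ] ℝ) : Prop :=
  ∀ (m : ℕ) (w : OrthonormalBasis (Fin m) ℝ X) (s t : Finset (Fin m)),
    innE (wedgeOf (⇑w) s) (wedgeOf (⇑w) t) = if s = t then 1 else 0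

/-- `lcontr` is the left contraction: `⟨M ⌟ N, L⟩ = ⟨N, M ∧ L⟩`. -/
def ContrOK {X : Type*} [NormedAddCommGroup X] [InnerProductSpace ℝ X]
    (innE : ExteriorAlgebra ℝ X →ₗ[ℝ] ExteriorAlgebra ℝ X →ₗ[ℝ] ℝ)
    (lcontr : ExteriorAlgebra ℝ X →ₗ[ℝ] ExteriorAlgebra ℝ X →ₗ[ℝ] ExteriorAlgebra ℝ X) :
    Prop :=
  ∀ M N L : ExteriorAlgebra ℝ X, innE (lcontr M N) L = innE N (M * L)

/-!
For an orthonormal basis `w` of `X`, the wedges `w_s` form an orthonormal basis of `⋀X`, on which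
`w i ∧ ·` and `w i ⌟ ·` insert and remove the index `i` up to the same sign. Hence
`e ⌟ (e ∧ P) + e ∧ (e ⌟ P) = P` for a unit vector `e`; if `e ∧ M = 0` this gives
`M = e ∧ (e ⌟ M)` and `M ⌟ N = (e ⌟ M) ⌟ (e ⌟ N)`, which vanishes when `e ⌟ N = 0`.

For the converse assume `isp N + {v : v ⌟ M = 0} = X` and take `w` adapted to `I = isp N`, with
`K` the indices of the basis vectors lying in `I`. Every wedge on which `N` has a nonzero
coefficient contains `K`. Some wedge `w_t` with `t ⊆ K` has a nonzero coefficient in `M`: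
otherwise take such a `w_s` with `#(s \ K)` minimal and `i ∈ s \ K`, write `w i = h + a` with
`h ∈ I` and `a ⌟ M = 0`, and pair `w i ⌟ M = h ⌟ M` with `w_{s \ {i}}`. Finally pair
`M ∧ w_{y \ t}` with `N`, where `w_y` carries a nonzero coefficient of `N` and `#y` is maximal:
only the term of `w_t` survives, so `M ⌟ N ≠ 0`.
-/

open scoped Finset

section Wedge

variable {X : Type*} [AddCommGroup X] [Module ℝ X] {n : ℕ}

def wedgeSign (i : Fin n) (s : Finset (Fin n)) : ℝ :=
  (-1) ^ #{j ∈ s | j < i}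

lemma wedgeSign_mul_self (i : Fin n) (s : Finset (Fin n)) : wedgeSign i s * wedgeSign i s = 1 := by
  rw [wedgeSign, ← mul_pow]; norm_num

lemma wedgeSign_ne_zero (i : Fin n) (s : Finset (Fin n)) : wedgeSign i s ≠ 0 :=
  left_ne_zero_of_mul_eq_one (wedgeSign_mul_self i s)

@[simp]
lemma wedgeSign_insert_self (i : Fin n) (s : Finset (Fin n)) :
    wedgeSign i (insert i s) = wedgeSign i s := by
  simp [wedgeSign, Finset.filter_insert]

@[simp]
lemma wedgeSign_erase_self (i : Fin n) (s : Finset (Fin n)) :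
    wedgeSign i (s.erase i) = wedgeSign i s := by
  simp [wedgeSign, Finset.filter_erase]

lemma wedgeOf_insert_of_lt (v : Fin n → X) {a : Fin n} {s : Finset (Fin n)}
    (ha : ∀ x ∈ s, a < x) : wedgeOf v (insert a s) = ι ℝ (v a) * wedgeOf v s := by
  rw [wedgeOf, Finset.sort_insert _ (fun x hx => (ha x hx).le) (fun h => (ha a h).false),
    List.map_cons, List.prod_cons, wedgeOf]

lemma ι_mul_wedgeOf_of_notMem (v : Fin n → X) {i : Fin n} {s : Finset (Fin n)} (hi : i ∉ s) :
    ι ℝ (v i) * wedgeOf v s = wedgeSign i s • wedgeOf v (insert i s) := by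
  induction s using Finset.induction_on_min with
  | empty => simp [wedgeOf, wedgeSign]
  | insert a s has ih =>
    obtain ⟨hia, his⟩ : i ≠ a ∧ i ∉ s := by simpa [not_or] using hi
    rcases lt_or_gt_of_ne hia with hlt | hgt
    · have hmin : ∀ x ∈ insert a s, i < x := by
        simpa [hlt] using fun x hx => hlt.trans (has x hx)
      have hsign : wedgeSign i (insert a s) = 1 := by
        simp [wedgeSign, Finset.filter_eq_empty_iff.mpr fun x hx => (hmin x hx).not_gt]
      rw [hsign, one_smul, wedgeOf_insert_of_lt v hmin]
    · have hmin : ∀ x ∈ insert i s, a < x := by simpa [hgt] using has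
      have hsign : wedgeSign i (insert a s) = -wedgeSign i s := by
        rw [wedgeSign, wedgeSign, Finset.filter_insert, if_pos hgt,
          Finset.card_insert_of_notMem fun h => (has a (Finset.mem_filter.mp h).1).false,
          pow_succ, mul_neg_one]
      rw [wedgeOf_insert_of_lt v has, ← mul_assoc,
        eq_neg_of_add_eq_zero_left (ι_add_mul_swap (v i) (v a)), neg_mul, mul_assoc, ih his,
        mul_smul_comm, ← wedgeOf_insert_of_lt v hmin, Finset.insert_comm, hsign, neg_smul]

lemma ι_mul_wedgeOf_of_mem (v : Fin n → X) {i : Fin n} {s : Finset (Fin n)} (hi : i ∈ s) :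
    ι ℝ (v i) * wedgeOf v s = 0 := by
  have hs : wedgeOf v s = wedgeSign i s • (ι ℝ (v i) * wedgeOf v (s.erase i)) := by
    rw [ι_mul_wedgeOf_of_notMem v (s.notMem_erase i), Finset.insert_erase hi,
      wedgeSign_erase_self, smul_smul, wedgeSign_mul_self, one_smul]
  rw [hs, mul_smul_comm, ← mul_assoc, ι_sq_zero, zero_mul, smul_zero]

lemma wedgeOf_mul_wedgeOf (v : Fin n → X) (s t : Finset (Fin n)) :
    ∃ c : ℝ, wedgeOf v s * wedgeOf v t = c • wedgeOf v (s ∪ t) ∧ (c ≠ 0 ↔ Disjoint s t) := by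
  induction s using Finset.induction_on_min with
  | empty => exact ⟨1, by simp [wedgeOf], by simp⟩
  | insert a s has ih =>
    obtain ⟨c, hc, hc0⟩ := ih
    rw [wedgeOf_insert_of_lt v has, mul_assoc, hc, mul_smul_comm, Finset.insert_union]
    by_cases hat : a ∈ s ∪ t
    · have has' : a ∈ t := (Finset.mem_union.mp hat).resolve_left fun h => (has a h).false
      refine ⟨0, by rw [ι_mul_wedgeOf_of_mem v hat, smul_zero, zero_smul], ?_⟩
      simp [Finset.disjoint_insert_left, has']
    · refine ⟨c * wedgeSign a (s ∪ t), ?_, ?_⟩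
      · rw [ι_mul_wedgeOf_of_notMem v hat, smul_smul]
      · have hat' : a ∉ t := fun h => hat (Finset.mem_union_right s h)
        simp [wedgeSign_ne_zero, Finset.disjoint_insert_left, hc0, hat']

lemma span_range_wedgeOf {v : Fin n → X} (hv : Submodule.span ℝ (Set.range v) = ⊤) :
    Submodule.span ℝ (Set.range (wedgeOf v)) = ⊤ := by
  set S := Submodule.span ℝ (Set.range (wedgeOf v))
  have hι : ∀ x : X, ∀ p ∈ S, ι ℝ x * p ∈ S := by
    intro x
    have hx : x ∈ Submodule.span ℝ (Set.range v) := hv ▸ Submodule.mem_top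
    induction hx using Submodule.span_induction with
    | mem x hx =>
      obtain ⟨i, rfl⟩ := hx
      intro p hp
      induction hp using Submodule.span_induction with
      | mem x hx =>
        obtain ⟨s, rfl⟩ := hx
        by_cases h : i ∈ s
        · simp [ι_mul_wedgeOf_of_mem v h]
        · rw [ι_mul_wedgeOf_of_notMem v h]
          exact S.smul_mem _ (Submodule.subset_span ⟨_, rfl⟩)
      | zero => simp
      | add x y _ _ hx hy => rw [mul_add]; exact S.add_mem hx hy
      | smul c x _ hx => rw [mul_smul_comm]; exact S.smul_mem c hx
    | zero => simp
    | add x y _ _ hx hy => intro p hp; rw [map_add, add_mul]; exact S.add_mem (hx p hp) (hy p hp)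
    | smul c x _ hx => intro p hp; rw [map_smul, smul_mul_assoc]; exact S.smul_mem c (hx p hp)
  refine Submodule.eq_top_iff'.mpr fun P => ?_
  induction P using CliffordAlgebra.left_induction with
  | algebraMap r =>
    rw [Algebra.algebraMap_eq_smul_one]
    exact S.smul_mem r (Submodule.subset_span ⟨∅, by simp [wedgeOf]⟩)
  | add x y hx hy => exact S.add_mem hx hy
  | ι_mul x m hx => exact hι m x hx

end Wedge

section InnerProduct

variable {X : Type*} [NormedAddCommGroup X] [InnerProductSpace ℝ X]
  {innE : ExteriorAlgebra ℝ X →ₗ[ℝ] ExteriorAlgebra ℝ X →ₗ[ℝ] ℝ} (hinn : InnerOK innE)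
  {m : ℕ} (w : OrthonormalBasis (Fin m) ℝ X)
include hinn

lemma linearIndependent_wedgeOf : LinearIndependent ℝ (wedgeOf ⇑w) :=
  LinearMap.BilinForm.linearIndependent_of_iIsOrtho (B := innE)
    (LinearMap.BilinForm.iIsOrtho_def.mpr fun s t hst => by simp [hinn m w s t, hst])
    (fun s => by simp [hinn m w s s])

def wedgeBasis : Module.Basis (Finset (Fin m)) ℝ (ExteriorAlgebra ℝ X) :=
  Module.Basis.mk (linearIndependent_wedgeOf hinn w) (span_range_wedgeOf w.toBasis.span_eq).ge

@[simp]
lemma coe_wedgeBasis : ⇑(wedgeBasis hinn w) = wedgeOf ⇑w :=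
  Module.Basis.coe_mk _ _

lemma wedgeBasis_repr_apply (P : ExteriorAlgebra ℝ X) (t : Finset (Fin m)) :
    (wedgeBasis hinn w).repr P t = innE P (wedgeOf w t) := by
  conv_rhs => rw [← (wedgeBasis hinn w).sum_repr P]
  simp [map_sum, hinn m w]

lemma innE_wedgeOf_comm (P : ExteriorAlgebra ℝ X) (t : Finset (Fin m)) :
    innE (wedgeOf w t) P = innE P (wedgeOf w t) := by
  rw [← wedgeBasis_repr_apply hinn w]
  conv_lhs => rw [← (wedgeBasis hinn w).sum_repr P]
  simp [map_sum, hinn m w]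

lemma ext_innE_wedgeOf {P Q : ExteriorAlgebra ℝ X}
    (h : ∀ t, innE P (wedgeOf w t) = innE Q (wedgeOf w t)) : P = Q :=
  (wedgeBasis hinn w).ext_elem fun t => by simp only [wedgeBasis_repr_apply, h]

lemma innE_mul_eq_sum (P Q L : ExteriorAlgebra ℝ X) :
    innE L (P * Q) = ∑ s, innE P (wedgeOf w s) * innE L (wedgeOf w s * Q) := by
  conv_lhs => rw [← (wedgeBasis hinn w).sum_repr P]
  simp [Finset.sum_mul, map_sum, wedgeBasis_repr_apply]

end InnerProduct

section OrthonormalBasis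

variable {X : Type*} [NormedAddCommGroup X] [InnerProductSpace ℝ X] [FiniteDimensional ℝ X]

lemma exists_orthonormalBasis_apply_eq {e : X} (he : ‖e‖ = 1) :
    ∃ (w : OrthonormalBasis (Fin (Module.finrank ℝ X)) ℝ X) (i : Fin (Module.finrank ℝ X)),
      w i = e := by
  have : Nontrivial X := ⟨e, 0, by rintro rfl; simp at he⟩
  let i : Fin (Module.finrank ℝ X) := ⟨0, Module.finrank_pos⟩
  obtain ⟨w, hw⟩ := Orthonormal.exists_orthonormalBasis_extension_of_card_eq (v := fun _ => e)
    (s := {i}) (Fintype.card_fin _).symm (orthonormal_subsingleton_iff.mpr fun _ => he)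
  exact ⟨w, i, hw i rfl⟩

lemma exists_orthonormalBasis_mem_or_mem_orthogonal (I : Submodule ℝ X) :
    ∃ w : OrthonormalBasis (Fin (Module.finrank ℝ X)) ℝ X, ∀ i, w i ∈ I ∨ w i ∈ Iᗮ := by
  have hI : DirectSum.IsInternal fun b : Bool => cond b I Iᗮ :=
    (DirectSum.isInternal_submodule_iff_isCompl _ (i := true) (j := false) (by simp)
      (by ext b; cases b <;> simp)).mpr I.isCompl_orthogonal
  refine ⟨hI.subordinateOrthonormalBasis rfl I.orthogonalFamily_self, fun i => ?_⟩
  obtain ⟨b, hb⟩ : ∃ b : Bool, _ ∈ cond b I Iᗮ :=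
    ⟨_, hI.subordinateOrthonormalBasis_subordinate rfl i I.orthogonalFamily_self⟩
  cases b <;> simp_all

end OrthonormalBasis

section Contraction

variable {X : Type*} [NormedAddCommGroup X] [InnerProductSpace ℝ X]
  {innE : ExteriorAlgebra ℝ X →ₗ[ℝ] ExteriorAlgebra ℝ X →ₗ[ℝ] ℝ}
  {lcontr : ExteriorAlgebra ℝ X →ₗ[ℝ] ExteriorAlgebra ℝ X →ₗ[ℝ] ExteriorAlgebra ℝ X}
  (hinn : InnerOK innE) (hc : ContrOK innE lcontr)
include hinn hc

lemma lcontr_mul [FiniteDimensional ℝ X] (A B P : ExteriorAlgebra ℝ X) :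
    lcontr (A * B) P = lcontr B (lcontr A P) :=
  ext_innE_wedgeOf hinn (stdOrthonormalBasis ℝ X) fun t => by rw [hc, hc, hc, mul_assoc]

lemma lcontr_ι_wedgeOf {m : ℕ} (w : OrthonormalBasis (Fin m) ℝ X) (i : Fin m)
    (s : Finset (Fin m)) :
    lcontr (ι ℝ (w i)) (wedgeOf w s) =
      if i ∈ s then wedgeSign i s • wedgeOf w (s.erase i) else 0 := by
  refine ext_innE_wedgeOf hinn w fun t => ?_
  rw [hc]
  by_cases hit : i ∈ t
  · rw [ι_mul_wedgeOf_of_mem w hit, map_zero]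
    split_ifs with his
    · have hst : s.erase i ≠ t := by rintro rfl; simp at hit
      simp [hinn m w, hst]
    · simp
  · rw [ι_mul_wedgeOf_of_notMem w hit, map_smul, smul_eq_mul, hinn m w]
    rcases eq_or_ne s (insert i t) with rfl | hst
    · simp [hinn m w, Finset.erase_insert hit]
    · rw [if_neg hst, mul_zero]
      split_ifs with his
      · have hst' : s.erase i ≠ t := by rintro rfl; exact hst (Finset.insert_erase his).symm
        simp [hinn m w, hst']
      · simp

lemma lcontr_ι_ι_mul_add_ι_mul_lcontr_ι {m : ℕ} (w : OrthonormalBasis (Fin m) ℝ X) (i : Fin m)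
    (P : ExteriorAlgebra ℝ X) :
    lcontr (ι ℝ (w i)) (ι ℝ (w i) * P) + ι ℝ (w i) * lcontr (ι ℝ (w i)) P = P := by
  let f : ExteriorAlgebra ℝ X →ₗ[ℝ] ExteriorAlgebra ℝ X :=
    lcontr (ι ℝ (w i)) ∘ₗ LinearMap.mulLeft ℝ (ι ℝ (w i)) +
      LinearMap.mulLeft ℝ (ι ℝ (w i)) ∘ₗ lcontr (ι ℝ (w i))
  suffices f = LinearMap.id from LinearMap.congr_fun this P
  refine (wedgeBasis hinn w).ext fun s => ?_
  by_cases his : i ∈ s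
  · have hs := ι_mul_wedgeOf_of_notMem w (s.notMem_erase i)
    rw [Finset.insert_erase his, wedgeSign_erase_self] at hs
    simp [f, ι_mul_wedgeOf_of_mem w his, lcontr_ι_wedgeOf hinn hc w, his, hs, smul_smul,
      wedgeSign_mul_self]
  · simp [f, ι_mul_wedgeOf_of_notMem w his, lcontr_ι_wedgeOf hinn hc w, his, smul_smul,
      wedgeSign_mul_self, Finset.erase_insert his]

lemma ι_mul_lcontr_ι_of_ι_mul_eq_zero {m : ℕ} (w : OrthonormalBasis (Fin m) ℝ X) {i : Fin m}
    {M : ExteriorAlgebra ℝ X} (hM : ι ℝ (w i) * M = 0) : ι ℝ (w i) * lcontr (ι ℝ (w i)) M = M := by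
  simpa [hM] using lcontr_ι_ι_mul_add_ι_mul_lcontr_ι hinn hc w i M

lemma lcontr_eq_zero_of_ι_mul_eq_zero [FiniteDimensional ℝ X] {v : X} (hv : v ≠ 0)
    {M N : ExteriorAlgebra ℝ X} (hM : ι ℝ v * M = 0) (hN : lcontr (ι ℝ v) N = 0) : lcontr M N = 0 := by
  obtain ⟨w, i, hwi⟩ := exists_orthonormalBasis_apply_eq (norm_smul_inv_norm (𝕜 := ℝ) hv)
  have hM' : ι ℝ (w i) * M = 0 := by rw [hwi, map_smul, smul_mul_assoc, hM, smul_zero]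
  have hN' : lcontr (ι ℝ (w i)) N = 0 := by
    rw [hwi, map_smul, map_smul, LinearMap.smul_apply, hN, smul_zero]
  calc lcontr M N = lcontr (ι ℝ (w i) * lcontr (ι ℝ (w i)) M) N := by
        rw [ι_mul_lcontr_ι_of_ι_mul_eq_zero hinn hc w hM']
    _ = lcontr (lcontr (ι ℝ (w i)) M) (lcontr (ι ℝ (w i)) N) := lcontr_mul hinn hc _ _ _
    _ = 0 := by rw [hN', map_zero]

end Contraction

section Coefficients

variable {X : Type*} [NormedAddCommGroup X] [InnerProductSpace ℝ X]
  {innE : ExteriorAlgebra ℝ X →ₗ[ℝ] ExteriorAlgebra ℝ X →ₗ[ℝ] ℝ}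
  {lcontr : ExteriorAlgebra ℝ X →ₗ[ℝ] ExteriorAlgebra ℝ X →ₗ[ℝ] ExteriorAlgebra ℝ X}
  {m : ℕ} (w : OrthonormalBasis (Fin m) ℝ X)

lemma innE_ι_mul_wedgeOf_eq_zero {I : Submodule ℝ X} {K : Finset (Fin m)}
    (hK : ∀ j ∉ K, w j ∈ Iᗮ) {h : X} (hh : h ∈ I) {M : ExteriorAlgebra ℝ X}
    {y : Finset (Fin m)} (hy : ∀ j ∈ K, j ∉ y → innE M (wedgeOf w (insert j y)) = 0) :
    innE M (ι ℝ h * wedgeOf w y) = 0 := by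
  rw [← w.sum_repr' h]
  simp only [map_sum, Finset.sum_mul, map_smul, smul_mul_assoc]
  refine Finset.sum_eq_zero fun j _ => ?_
  by_cases hjK : j ∈ K
  · by_cases hjy : j ∈ y
    · simp [ι_mul_wedgeOf_of_mem w hjy]
    · simp [ι_mul_wedgeOf_of_notMem w hjy, hy j hjK hjy]
  · simp [Submodule.inner_left_of_mem_orthogonal hh (hK j hjK)]

variable (hinn : InnerOK innE) (hc : ContrOK innE lcontr)
include hinn hc

lemma innE_wedgeOf_eq_zero_of_ι_mul_eq_zero {i : Fin m} {t : Finset (Fin m)}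
    {N : ExteriorAlgebra ℝ X} (hN : ι ℝ (w i) * N = 0) (hit : i ∉ t) :
    innE N (wedgeOf w t) = 0 := by
  have h := hc (ι ℝ (w i)) (wedgeOf w (insert i t)) N
  rw [hN, map_zero, lcontr_ι_wedgeOf hinn hc w, if_pos (Finset.mem_insert_self i t),
    Finset.erase_insert hit, map_smul, LinearMap.smul_apply, smul_eq_mul,
    innE_wedgeOf_comm hinn w] at h
  exact (mul_eq_zero.mp h).resolve_left (wedgeSign_ne_zero i _)

lemma exists_subset_innE_wedgeOf_ne_zero {I : Submodule ℝ X} {K : Finset (Fin m)}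
    (hK : ∀ j ∉ K, w j ∈ Iᗮ) {M : ExteriorAlgebra ℝ X} (hIM : I ⊔ ospKer lcontr M = ⊤)
    (hM : M ≠ 0) : ∃ t ⊆ K, innE M (wedgeOf w t) ≠ 0 := by
  by_contra! hpure
  have hsupp : {s | innE M (wedgeOf w s) ≠ 0}.Nonempty := by
    by_contra! h
    exact hM (ext_innE_wedgeOf hinn w fun t => by simpa using Set.eq_empty_iff_forall_notMem.mp h t)
  obtain ⟨s, hs, hmin⟩ := (measure fun s : Finset (Fin m) => #(s \ K)).wf.has_min _ hsupp
  obtain ⟨i, his, hiK⟩ := Finset.not_subset.mp fun h => hs (hpure s h)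
  obtain ⟨h, hh, a, ha, hsum⟩ := Submodule.mem_sup.mp (hIM ▸ Submodule.mem_top : w i ∈ _)
  have hy : ∀ j ∈ K, j ∉ s.erase i → innE M (wedgeOf w (insert j (s.erase i))) = 0 := by
    intro j hjK _
    by_contra hne
    apply hmin _ hne
    change #(insert j (s.erase i) \ K) < #(s \ K)
    rw [Finset.insert_sdiff_of_mem _ hjK, Finset.erase_sdiff_comm]
    exact Finset.card_erase_lt_of_mem (Finset.mem_sdiff.mpr ⟨his, hiK⟩)
  have hcontr : lcontr (ι ℝ (w i)) M = lcontr (ι ℝ h) M := by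
    rw [← hsum, map_add, map_add, LinearMap.add_apply, show lcontr (ι ℝ a) M = 0 from ha, add_zero]
  have key := hc (ι ℝ (w i)) M (wedgeOf w (s.erase i))
  rw [hcontr, hc, innE_ι_mul_wedgeOf_eq_zero w hK hh hy,
    ι_mul_wedgeOf_of_notMem w (s.notMem_erase i), Finset.insert_erase his, map_smul,
    smul_eq_mul, wedgeSign_erase_self] at key
  exact mul_ne_zero (wedgeSign_ne_zero _ _) hs key.symm

lemma lcontr_ne_zero_of_innE_wedgeOf_ne_zero {K : Finset (Fin m)} {M N : ExteriorAlgebra ℝ X}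
    (hNK : ∀ y, innE N (wedgeOf w y) ≠ 0 → K ⊆ y) (hN : N ≠ 0) {t : Finset (Fin m)}
    (htK : t ⊆ K) (hMt : innE M (wedgeOf w t) ≠ 0) : lcontr M N ≠ 0 := by
  classical
  have hsupp : ({y | innE N (wedgeOf w y) ≠ 0} : Finset _).Nonempty := by
    by_contra! h
    refine hN (ext_innE_wedgeOf hinn w fun y => ?_)
    simpa using Finset.eq_empty_iff_forall_notMem.mp h y
  obtain ⟨y, hy, hmax⟩ := Finset.exists_max_image _ Finset.card hsupp
  simp only [Finset.mem_filter, Finset.mem_univ, true_and] at hy hmax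
  have hty : t ⊆ y := htK.trans (hNK y hy)
  set Y := y \ t
  have hother : ∀ s ≠ t, innE N (wedgeOf w s * wedgeOf w Y) = 0 := by
    intro s hst
    obtain ⟨c, hmul, hc0⟩ := wedgeOf_mul_wedgeOf w s Y
    rw [hmul, map_smul, smul_eq_mul, mul_eq_zero, or_iff_not_imp_left]
    intro hc'
    have hdisj := hc0.mp hc'
    by_contra hne
    have hts : t ⊆ s := fun x hx => (Finset.mem_union.mp (hNK _ hne (htK hx))).resolve_right
      fun hxY => (Finset.mem_sdiff.mp hxY).2 hx
    have hcard : #s + #Y ≤ #t + #Y := by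
      rw [← Finset.card_union_of_disjoint hdisj,
        ← Finset.card_union_of_disjoint Finset.disjoint_sdiff,
        Finset.union_sdiff_of_subset hty]
      exact hmax _ hne
    exact hst (Finset.eq_of_subset_of_card_le hts (by omega)).symm
  intro h0
  have hsum := innE_mul_eq_sum hinn w M (wedgeOf w Y) N
  rw [← hc, h0, map_zero, LinearMap.zero_apply,
    Finset.sum_eq_single t (fun s _ hst => by rw [hother s hst, mul_zero]) (by simp)] at hsum
  obtain ⟨c, hmul, hc0⟩ := wedgeOf_mul_wedgeOf w t Y
  rw [hmul, Finset.union_sdiff_of_subset hty, map_smul, smul_eq_mul] at hsum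
  exact mul_ne_zero hMt (mul_ne_zero (hc0.mpr Finset.disjoint_sdiff) hy) hsum.symm

end Coefficients

/-- Partial orthogonality and vanishing of contractions. -/
theorem pperp_isp_osp {X : Type*} [NormedAddCommGroup X] [InnerProductSpace ℝ X]
    [FiniteDimensional ℝ X]
    (innE : ExteriorAlgebra ℝ X →ₗ[ℝ] ExteriorAlgebra ℝ X →ₗ[ℝ] ℝ)
    (lcontr : ExteriorAlgebra ℝ X →ₗ[ℝ] ExteriorAlgebra ℝ X →ₗ[ℝ] ExteriorAlgebra ℝ X)
    (hinn : InnerOK innE) (hc : ContrOK innE lcontr)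
    (M N : ExteriorAlgebra ℝ X) :
    ((osp lcontr N)ᗮ ⊓ isp M ≠ ⊥ → lcontr M N = 0) ∧
    (M ≠ 0 → N ≠ 0 → lcontr M N = 0 → (isp N)ᗮ ⊓ osp lcontr M ≠ ⊥) := by
  refine ⟨fun hne => ?_, fun hM hN h0 hbot => ?_⟩
  · obtain ⟨v, ⟨hvN, hvM⟩, hv0⟩ := (Submodule.ne_bot_iff _).mp hne
    rw [osp, Submodule.orthogonal_orthogonal] at hvN
    exact lcontr_eq_zero_of_ι_mul_eq_zero hinn hc hv0 hvM hvN
  · have htop : isp N ⊔ ospKer lcontr M = ⊤ := by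
      rwa [← Submodule.orthogonal_eq_bot_iff, ← Submodule.inf_orthogonal]
    obtain ⟨w, hw⟩ := exists_orthonormalBasis_mem_or_mem_orthogonal (isp N)
    classical
    let K : Finset (Fin _) := {i | w i ∈ isp N}
    have hNK : ∀ y, innE N (wedgeOf w y) ≠ 0 → K ⊆ y := fun y hy i hi => by
      by_contra hiy
      exact hy (innE_wedgeOf_eq_zero_of_ι_mul_eq_zero w hinn hc (Finset.mem_filter.mp hi).2 hiy)
    have hK : ∀ i ∉ K, w i ∈ (isp N)ᗮ := fun i hi => (hw i).resolve_left (by simpa [K] using hi)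
    obtain ⟨t, htK, hMt⟩ := exists_subset_innE_wedgeOf_ne_zero w hinn hc hK htop hM
    exact lcontr_ne_zero_of_innE_wedgeOf_ne_zero w hinn hc hNK hN htK hMt h0
end
end

section
/- Let 0 ≠ M ∈ ⋀X and let V ⊆ X be a subspace with X = isp(M) ⊕ V. Then there exists a maximal tight blade factorization M = B∧N with N ∈ ⋀V, and it is unique up to scalars: if M = B∧N = B'∧N' are two maximal tight blade factorizations with N, N' ∈ ⋀V, then B' = λB and N' = λ^{-1}N for some nonzero scalar λ. -/
/-!
Setup: `X` is a finite-dimensional real inner product space, `⋀X` its exterior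
algebra.  We hypothesize a bilinear form `innE` on the exterior algebra which makes
the wedges of any orthonormal basis of `X` (over increasing index sets) orthonormal
— this characterizes the inner product of the paper — and a bilinear left
contraction `lcontr` adjoint to the wedge product: `⟨M⌟N, L⟩ = ⟨N, M∧L⟩`.

Proof idea: join a basis of `isp M` (indices `P`) and a basis of `V` into a basis `e` of `X`;
the wedges `e_s`, `s` a set of indices, form a basis of `⋀X`, and `e_s ∧ e_t` is `±e_{s ∪ t}`
or `0`. Since `e_i ∧ M = 0` for `i ∈ P`, only wedges `e_s` with `P ⊆ s` occur in `M`, so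
`M = e_P ∧ N` with `N` in the span of the `e_s`, `s ∩ P = ∅`, which is `⋀V`. Left multiplication
by `e_P` is injective on `⋀V`, and two blades spanning `isp M` differ by a determinant factor,
which gives uniqueness. For tightness, take an orthonormal basis adapted to `V ⊕ V^⊥`: for
`x ⊥ V`, `⟨x ⌟ N, L⟩ = ⟨N, x ∧ L⟩` pairs wedges inside `V` with wedges having a factor in `V^⊥`,
hence vanishes; so `osp N ⊆ V`, which meets `isp M` only in `0`.
-/

noncomputable section

open ExteriorAlgebra

/-- The exterior product `v₁ ∧ ⋯ ∧ v_p` of a tuple of vectors. -/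
def bladeOf {X : Type*} [AddCommGroup X] [Module ℝ X] {p : ℕ}
    (f : Fin p → X) : ExteriorAlgebra ℝ X :=
  (List.ofFn fun i => ι ℝ (f i)).prod

/-- The subalgebra `⋀V` of `⋀X` generated by a subspace `V` of `X`. -/
def extSub {X : Type*} [AddCommGroup X] [Module ℝ X] (V : Submodule ℝ X) :
    Subalgebra ℝ (ExteriorAlgebra ℝ X) :=
  Algebra.adjoin ℝ ((ι ℝ : X →ₗ[ℝ] ExteriorAlgebra ℝ X) '' (V : Set X))

namespace ExteriorAlgebra

open Submodule

section Basis

variable {R X I : Type*} [CommRing R] [AddCommGroup X] [Module R X] [LinearOrder I]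
  (b : Module.Basis I R X)

theorem basis_eq_ιMulti (s : Finset I) :
    b.ExteriorAlgebra s = ιMulti R s.card (b ∘ s.orderEmbOfFin rfl) :=
  basis_apply_ofCard b rfl

@[simp] theorem basis_empty : b.ExteriorAlgebra ∅ = 1 := by
  rw [basis_apply_ofCard b Finset.card_empty]
  exact ιMulti_zero_apply _

@[simp] theorem basis_singleton (i : I) : b.ExteriorAlgebra {i} = ι R (b i) := by
  rw [basis_apply_ofCard b (Finset.card_singleton i)]
  simp only [ιMulti_apply, List.ofFn_succ, List.ofFn_zero, List.prod_cons, List.prod_nil, mul_one]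
  exact congrArg (ι R ∘ b) (Finset.orderEmbOfFin_singleton i 0)

theorem basis_mul_basis_of_not_disjoint {s t : Finset I} (h : ¬Disjoint s t) :
    b.ExteriorAlgebra s * b.ExteriorAlgebra t = 0 :=
  basis_mul_of_not_disjoint b (Set.powersetCard.ofCard rfl) (Set.powersetCard.ofCard rfl) h

theorem exists_basis_mul_basis_of_disjoint {s t : Finset I} (h : Disjoint s t) :
    ∃ ε : Rˣ, b.ExteriorAlgebra s * b.ExteriorAlgebra t = ε • b.ExteriorAlgebra (s ∪ t) := by
  obtain ⟨σ, hσ⟩ : ∃ σ : ℤˣ,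
      b.ExteriorAlgebra s * b.ExteriorAlgebra t = σ • b.ExteriorAlgebra (s ∪ t) := by
    have := basis_mul_of_disjoint b (Set.powersetCard.ofCard rfl)
      (Set.powersetCard.ofCard rfl) h
    change b.ExteriorAlgebra s * b.ExteriorAlgebra t = _ • b.ExteriorAlgebra (s.disjUnion t h)
      at this
    rw [Finset.disjUnion_eq_union] at this
    exact ⟨_, this⟩
  refine ⟨Units.map (Int.castRingHom R : ℤ →* R) σ, ?_⟩
  rw [hσ, Units.smul_def, Units.smul_def, Units.coe_map]
  exact (Int.cast_smul_eq_zsmul R _ _).symm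

theorem basis_mul_basis_mem_span {s t : Finset I} {T : Set (Finset I)} (hst : s ∪ t ∈ T) :
    b.ExteriorAlgebra s * b.ExteriorAlgebra t ∈ span R (b.ExteriorAlgebra '' T) := by
  by_cases h : Disjoint s t
  · obtain ⟨ε, hε⟩ := exists_basis_mul_basis_of_disjoint b h
    rw [hε]
    exact Submodule.smul_of_tower_mem _ _ (subset_span ⟨_, hst, rfl⟩)
  · rw [basis_mul_basis_of_not_disjoint b h]
    exact zero_mem _

theorem eq_zero_of_basis_mul_eq_zero {P : Finset I} {N : ExteriorAlgebra R X}
    (hN : N ∈ span R (b.ExteriorAlgebra '' {s | Disjoint P s}))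
    (h : b.ExteriorAlgebra P * N = 0) : N = 0 := by
  -- `e_P * e_s = ±e_{P ∪ s}`, and `s ↦ P ∪ s` is injective on the sets disjoint from `P`.
  choose ε hε using fun s : {s | Disjoint P s} => exists_basis_mul_basis_of_disjoint b s.2
  have hinj : Function.Injective fun s : {s | Disjoint P s} => P ∪ s.1 := fun s t hst => by
    rw [Subtype.ext_iff, ← Finset.union_sdiff_cancel_left s.2,
      ← Finset.union_sdiff_cancel_left t.2]
    exact congrArg (· \ P) hst
  have hli := (b.ExteriorAlgebra.linearIndependent.comp _ hinj).units_smul ε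
  rw [Set.image_eq_range, Finsupp.mem_span_range_iff_exists_finsupp] at hN
  obtain ⟨c, rfl⟩ := hN
  rw [linearIndependent_iff.1 hli c ?_, Finsupp.sum_zero_index]
  simpa [Finsupp.linearCombination_apply, Finsupp.mul_sum, mul_smul_comm, hε] using h

theorem mem_span_basis_of_ι_mul_eq_zero {i : I} {M : ExteriorAlgebra R X}
    (h : ι R (b i) * M = 0) : M ∈ span R (b.ExteriorAlgebra '' {s | i ∈ s}) := by
  have htop : span R (b.ExteriorAlgebra '' {s | i ∈ s}) ⊔
      span R (b.ExteriorAlgebra '' {s | i ∈ s}ᶜ) = ⊤ := by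
    rw [← span_union, ← Set.image_union, Set.union_compl_self, Set.image_univ,
      b.ExteriorAlgebra.span_eq]
  obtain ⟨M₁, hM₁, M₂, hM₂, rfl⟩ := mem_sup.1 (htop ▸ mem_top : M ∈ _)
  have hkill : span R (b.ExteriorAlgebra '' {s | i ∈ s}) ≤
      LinearMap.ker (LinearMap.mulLeft R (ι R (b i))) := by
    refine span_le.2 ?_
    rintro _ ⟨s, hs, rfl⟩
    rw [SetLike.mem_coe, LinearMap.mem_ker, LinearMap.mulLeft_apply, ← basis_singleton]
    exact basis_mul_basis_of_not_disjoint b (by simpa using hs)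
  have h₁ : ι R (b i) * M₁ = 0 := hkill hM₁
  have h₂ : M₂ = 0 := by
    refine eq_zero_of_basis_mul_eq_zero b (P := {i}) (by simpa [Set.compl_ofPred] using hM₂) ?_
    simpa [mul_add, h₁] using h
  simpa [h₂] using hM₁

theorem mem_span_basis_of_forall_ι_mul_eq_zero {P : Finset I} {M : ExteriorAlgebra R X}
    (h : ∀ i ∈ P, ι R (b i) * M = 0) : M ∈ span R (b.ExteriorAlgebra '' {s | P ⊆ s}) :=
  b.ExteriorAlgebra.mem_span_image.2 fun _ hs i hi =>
    b.ExteriorAlgebra.mem_span_image.1 (mem_span_basis_of_ι_mul_eq_zero b (h i hi)) hs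

theorem exists_eq_basis_mul_of_forall_ι_mul_eq_zero {P : Finset I} {M : ExteriorAlgebra R X}
    (h : ∀ i ∈ P, ι R (b i) * M = 0) :
    ∃ N ∈ span R (b.ExteriorAlgebra '' {s | Disjoint P s}), M = b.ExteriorAlgebra P * N := by
  have hle : span R (b.ExteriorAlgebra '' {s | P ⊆ s}) ≤
      (span R (b.ExteriorAlgebra '' {s | Disjoint P s})).map
        (LinearMap.mulLeft R (b.ExteriorAlgebra P)) := by
    refine span_le.2 ?_
    rintro _ ⟨s, hs, rfl⟩
    obtain ⟨ε, hε⟩ :=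
      exists_basis_mul_basis_of_disjoint b (Finset.disjoint_sdiff : Disjoint P (s \ P))
    rw [Finset.union_sdiff_of_subset hs] at hε
    refine ⟨ε⁻¹ • b.ExteriorAlgebra (s \ P),
      Submodule.smul_of_tower_mem _ _ (subset_span ⟨_, Finset.disjoint_sdiff, rfl⟩), ?_⟩
    rw [LinearMap.mulLeft_apply, mul_smul_comm, hε, inv_smul_smul]
  obtain ⟨N, hN, hMN⟩ := hle (mem_span_basis_of_forall_ι_mul_eq_zero b h)
  exact ⟨N, hN, hMN.symm⟩

theorem ι_mul_basis_mem_span {H : Set I} {x : X} (hx : x ∈ span R (b '' H)) (t : Finset I) :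
    ι R x * b.ExteriorAlgebra t ∈ span R (b.ExteriorAlgebra '' {u | ∃ j ∈ u, j ∈ H}) := by
  have hle : span R (b '' H) ≤ (span R (b.ExteriorAlgebra '' {u | ∃ j ∈ u, j ∈ H})).comap
      ((LinearMap.mulRight R (b.ExteriorAlgebra t)).comp (ι R)) := by
    refine span_le.2 ?_
    rintro _ ⟨j, hj, rfl⟩
    rw [SetLike.mem_coe, mem_comap, LinearMap.comp_apply, LinearMap.mulRight_apply,
      ← basis_singleton]
    exact basis_mul_basis_mem_span b ⟨j, by simp, hj⟩
  exact hle hx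

end Basis


section ExtSub

variable {X I : Type*} [AddCommGroup X] [Module ℝ X] [LinearOrder I] (b : Module.Basis I ℝ X)

open Submodule

theorem ιMulti_mem_extSub {V : Submodule ℝ X} {k : ℕ} {v : Fin k → X} (hv : ∀ i, v i ∈ V) :
    ιMulti ℝ k v ∈ extSub V := by
  rw [ιMulti_apply]
  refine Subalgebra.list_prod_mem _ fun x hx => ?_
  obtain ⟨i, rfl⟩ := List.mem_ofFn.1 hx
  exact Algebra.subset_adjoin ⟨v i, hv i, rfl⟩

theorem extSub_span_image_eq (G : Set I) :
    Subalgebra.toSubmodule (extSub (span ℝ (b '' G))) =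
      span ℝ (b.ExteriorAlgebra '' {s | ↑s ⊆ G}) := by
  set S := span ℝ (b.ExteriorAlgebra '' {s | ↑s ⊆ G})
  refine le_antisymm ?_ (span_le.2 ?_)
  · have hmul : S * S ≤ S := by
      rw [span_mul_span, span_le]
      rintro _ ⟨_, ⟨s, hs, rfl⟩, _, ⟨t, ht, rfl⟩, rfl⟩
      exact basis_mul_basis_mem_span b (by simpa using Set.union_subset hs ht)
    have hone : (1 : ExteriorAlgebra ℝ X) ∈ S := basis_empty b ▸ subset_span ⟨∅, by simp, rfl⟩
    have hι : span ℝ (b '' G) ≤ S.comap (ι ℝ) := by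
      refine span_le.2 ?_
      rintro _ ⟨j, hj, rfl⟩
      rw [SetLike.mem_coe, mem_comap, ← basis_singleton]
      exact subset_span ⟨{j}, by simpa using hj, rfl⟩
    have : extSub (span ℝ (b '' G)) ≤
        S.toSubalgebra hone fun x y hx hy => hmul (mul_mem_mul hx hy) :=
      Algebra.adjoin_le (Set.image_subset_iff.2 hι)
    exact this
  · rintro _ ⟨s, hs, rfl⟩
    rw [basis_eq_ιMulti]
    exact ιMulti_mem_extSub fun k => subset_span ⟨_, hs (s.orderEmbOfFin_mem rfl k), rfl⟩

theorem extSub_span_image_compl_eq (P : Finset I) :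
    Subalgebra.toSubmodule (extSub (span ℝ (b '' (↑P)ᶜ))) =
      span ℝ (b.ExteriorAlgebra '' {s | Disjoint P s}) := by
  simp [extSub_span_image_eq, Set.subset_compl_iff_disjoint_left]

end ExtSub

end ExteriorAlgebra

open Submodule in
theorem Module.Basis.span_image_eq_of_isCompl {R M ι : Type*} [Ring R] [AddCommGroup M]
    [Module R M] (b : Module.Basis ι R M) {W V : Submodule R M} (h : IsCompl W V) {S : Set ι}
    (hS : ∀ i ∈ S, b i ∈ W) (hSc : ∀ i ∉ S, b i ∈ V) : span R (b '' S) = W := by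
  have hW : span R (b '' S) ≤ W := span_le.2 (Set.image_subset_iff.2 hS)
  have hV : span R (b '' Sᶜ) ≤ V := span_le.2 (Set.image_subset_iff.2 hSc)
  have htop : span R (b '' S) ⊔ span R (b '' Sᶜ) = ⊤ := by
    rw [← span_union, ← Set.image_union, Set.union_compl_self, Set.image_univ, b.span_eq]
  refine le_antisymm hW ?_
  calc W = (span R (b '' S) ⊔ span R (b '' Sᶜ)) ⊓ W := by rw [htop, top_inf_eq]
    _ = span R (b '' S) ⊔ span R (b '' Sᶜ) ⊓ W := sup_inf_assoc_of_le _ hW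
    _ ≤ span R (b '' S) := by
      rw [(h.symm.disjoint.mono_left hV).eq_bot, sup_bot_eq]

theorem Module.Basis.exists_finset_span_image_eq_of_isCompl {R M ι : Type*} [Ring R]
    [AddCommGroup M] [Module R M] [Fintype ι] (b : Module.Basis ι R M) {W V : Submodule R M}
    (h : IsCompl W V) (hb : ∀ i, b i ∈ W ∨ b i ∈ V) :
    ∃ P : Finset ι, Submodule.span R (b '' P) = W ∧ Submodule.span R (b '' (↑P)ᶜ) = V := by
  classical
  refine ⟨Finset.univ.filter (b · ∈ W), b.span_image_eq_of_isCompl h ?_ ?_,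
    b.span_image_eq_of_isCompl h.symm ?_ ?_⟩ <;> intro i <;> have := hb i <;> simp <;> tauto

theorem Submodule.exists_basis_span_image_eq_of_isCompl {K M : Type*} [DivisionRing K]
    [AddCommGroup M] [Module K M] [FiniteDimensional K M] {W V : Submodule K M}
    (h : IsCompl W V) : ∃ (n : ℕ) (b : Module.Basis (Fin n) K M) (P : Finset (Fin n)),
      span K (b '' P) = W ∧ span K (b '' (↑P)ᶜ) = V := by
  let b := ((Module.finBasis K W).prod (Module.finBasis K V)).map (W.prodEquivOfIsCompl V h)
  refine ⟨_, _, (b.reindex (Fintype.equivFin _)).exists_finset_span_image_eq_of_isCompl h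
    fun i => ?_⟩
  rw [Module.Basis.reindex_apply]
  rcases (Fintype.equivFin _).symm i with j | j <;> simp [b]

theorem Submodule.exists_orthonormalBasis_mem_or_mem_orthogonal {𝕜 E : Type*} [RCLike 𝕜]
    [NormedAddCommGroup E] [InnerProductSpace 𝕜 E] [FiniteDimensional 𝕜 E] (V : Submodule 𝕜 E) :
    ∃ (n : ℕ) (w : OrthonormalBasis (Fin n) 𝕜 E), ∀ i, w i ∈ V ∨ w i ∈ Vᗮ := by
  let A : Bool → Submodule 𝕜 E := fun b => cond b V Vᗮ
  have hint : DirectSum.IsInternal A :=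
    (DirectSum.isInternal_submodule_iff_isCompl A (i := true) (j := false) (by decide)
      (by ext b; cases b <;> simp)).2 V.isCompl_orthogonal
  let w := hint.collectedOrthonormalBasis V.orthogonalFamily_self
    fun b => stdOrthonormalBasis 𝕜 (A b)
  refine ⟨_, w.reindex (Fintype.equivFin _), fun i => ?_⟩
  have hk : w _ ∈ A _ := hint.collectedOrthonormalBasis_mem V.orthogonalFamily_self
    (fun b => stdOrthonormalBasis 𝕜 (A b)) ((Fintype.equivFin _).symm i)
  rw [OrthonormalBasis.reindex_apply]
  cases hb : ((Fintype.equivFin _).symm i).1 <;> rw [hb] at hk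
  exacts [Or.inr hk, Or.inl hk]

theorem AlternatingMap.apply_eq_det_smul {R M N ι : Type*} [CommRing R] [AddCommGroup M]
    [Module R M] [AddCommGroup N] [Module R N] [Fintype ι] [DecidableEq ι]
    (F : M [⋀^ι]→ₗ[R] N) (e : Module.Basis ι R M) (v : ι → M) : F v = e.det v • F e := by
  have : F = (LinearMap.toSpanSingleton R N (F e)).compAlternatingMap e.det := by
    refine e.ext_alternating fun i hi => ?_
    let σ : Equiv.Perm ι := Equiv.ofBijective i (Finite.injective_iff_bijective.1 hi)
    change F (e ∘ σ) = (LinearMap.toSpanSingleton R N (F e)).compAlternatingMap e.det (e ∘ σ)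
    simp [AlternatingMap.map_perm, Module.Basis.det_self]
  conv_lhs => rw [this]
  rfl

section Blades

variable {X : Type*} [AddCommGroup X] [Module ℝ X]

open Submodule ExteriorAlgebra

theorem linearIndependent_of_bladeOf_ne_zero {p : ℕ} {f : Fin p → X} (h : bladeOf f ≠ 0) :
    LinearIndependent ℝ f := by
  contrapose! h
  exact (ιMulti ℝ p).map_linearDependent f h

theorem exists_bladeOf_eq_smul_of_span_eq {p q : ℕ} {f : Fin p → X} {g : Fin q → X}
    (hf : LinearIndependent ℝ f) (hg : LinearIndependent ℝ g)
    (h : span ℝ (Set.range g) = span ℝ (Set.range f)) : ∃ d : ℝ, bladeOf g = d • bladeOf f := by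
  obtain rfl : q = p := by
    have hcard := finrank_span_eq_card hg
    rw [h, finrank_span_eq_card hf] at hcard
    simpa using hcard.symm
  let g' : Fin q → span ℝ (Set.range f) := fun i => ⟨g i, h ▸ subset_span ⟨i, rfl⟩⟩
  refine ⟨(Module.Basis.span hf).det g', ?_⟩
  have := ((ιMulti ℝ q).compLinearMap (span ℝ (Set.range f)).subtype).apply_eq_det_smul
    (Module.Basis.span hf) g'
  simp only [AlternatingMap.compLinearMap_apply, Submodule.subtype_apply,
    Module.Basis.span_apply] at this
  exact this

theorem basis_eq_bladeOf {I : Type*} [LinearOrder I] (b : Module.Basis I ℝ X) (s : Finset I) :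
    b.ExteriorAlgebra s = bladeOf (b ∘ s.orderEmbOfFin rfl) :=
  basis_eq_ιMulti b s

theorem wedgeOf_eq_basis {n : ℕ} (b : Module.Basis (Fin n) ℝ X) (s : Finset (Fin n)) :
    wedgeOf b s = b.ExteriorAlgebra s := by
  rw [basis_eq_ιMulti, ιMulti_apply, wedgeOf, List.ofFn_eq_map,
    ← Finset.listMap_orderEmbOfFin_finRange s rfl, List.map_map]
  rfl

end Blades

section Factorization

variable {X : Type*} [NormedAddCommGroup X] [InnerProductSpace ℝ X]

open Submodule ExteriorAlgebra

theorem InnerOK.apply_basis_eq_repr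
    {innE : ExteriorAlgebra ℝ X →ₗ[ℝ] ExteriorAlgebra ℝ X →ₗ[ℝ] ℝ} (hinn : InnerOK innE)
    {n : ℕ} (w : OrthonormalBasis (Fin n) ℝ X) (z : ExteriorAlgebra ℝ X) (t : Finset (Fin n)) :
    innE z (w.toBasis.ExteriorAlgebra t) = w.toBasis.ExteriorAlgebra.repr z t := by
  have : innE.flip (w.toBasis.ExteriorAlgebra t) = w.toBasis.ExteriorAlgebra.coord t :=
    w.toBasis.ExteriorAlgebra.ext fun s => by
      rw [Module.Basis.coord_apply, Module.Basis.repr_self, Finsupp.single_apply,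
        LinearMap.flip_apply, ← wedgeOf_eq_basis, ← wedgeOf_eq_basis,
        OrthonormalBasis.coe_toBasis, hinn]
  exact LinearMap.congr_fun this z

theorem osp_le_of_mem_extSub [FiniteDimensional ℝ X]
    {innE : ExteriorAlgebra ℝ X →ₗ[ℝ] ExteriorAlgebra ℝ X →ₗ[ℝ] ℝ}
    {lcontr : ExteriorAlgebra ℝ X →ₗ[ℝ] ExteriorAlgebra ℝ X →ₗ[ℝ] ExteriorAlgebra ℝ X}
    (hinn : InnerOK innE) (hc : ContrOK innE lcontr) {V : Submodule ℝ X}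
    {N : ExteriorAlgebra ℝ X} (hN : N ∈ extSub V) : osp lcontr N ≤ V := by
  obtain ⟨m, w, hw⟩ := V.exists_orthonormalBasis_mem_or_mem_orthogonal
  obtain ⟨G, hG, hGc⟩ :=
    w.toBasis.exists_finset_span_image_eq_of_isCompl V.isCompl_orthogonal (by simpa using hw)
  set E := w.toBasis.ExteriorAlgebra
  have hNG : N ∈ span ℝ (E '' {s | ↑s ⊆ (G : Set (Fin m))}) := by
    rw [← extSub_span_image_eq, hG]
    exact hN
  suffices Vᗮ ≤ ospKer lcontr N by simpa [osp] using orthogonal_le this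
  intro x hx
  refine E.forall_coord_eq_zero_iff.1 fun t => ?_
  rw [Module.Basis.coord_apply, ← hinn.apply_basis_eq_repr, hc]
  refine (span_le (p := LinearMap.ker (innE N)).2 ?_) (ι_mul_basis_mem_span _ (hGc ▸ hx) t)
  rintro _ ⟨u, ⟨j, hju, hjG⟩, rfl⟩
  rw [SetLike.mem_coe, LinearMap.mem_ker, hinn.apply_basis_eq_repr]
  exact Finsupp.notMem_support_iff.1 fun hu => hjG (E.mem_span_image.1 hNG hu hju)

theorem eq_zero_of_bladeOf_mul_eq_zero [FiniteDimensional ℝ X] {p : ℕ} {f : Fin p → X}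
    {V : Submodule ℝ X}
    (hf : bladeOf f ≠ 0) (hV : IsCompl (span ℝ (Set.range f)) V) {K : ExteriorAlgebra ℝ X}
    (hK : K ∈ extSub V) (h : bladeOf f * K = 0) : K = 0 := by
  obtain ⟨n, b, P, hP, hPc⟩ := exists_basis_span_image_eq_of_isCompl hV
  obtain ⟨d, hd⟩ := exists_bladeOf_eq_smul_of_span_eq
    (b.linearIndependent.comp _ (P.orderEmbOfFin rfl).injective)
    (linearIndependent_of_bladeOf_ne_zero hf)
    (by rw [Set.range_comp, Finset.range_orderEmbOfFin, hP])
  rw [← basis_eq_bladeOf] at hd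
  rw [hd, smul_mul_assoc, smul_eq_zero] at h
  refine eq_zero_of_basis_mul_eq_zero b ?_ (h.resolve_left ?_)
  · rw [← extSub_span_image_compl_eq, hPc]
    exact hK
  · rintro rfl
    exact hf (by rw [hd, zero_smul])

theorem exists_bladeOf_mul_eq_of_isCompl_isp [FiniteDimensional ℝ X] {M : ExteriorAlgebra ℝ X}
    {V : Submodule ℝ X} (hV : IsCompl (isp M) V) :
    ∃ (p : ℕ) (f : Fin p → X) (N : ExteriorAlgebra ℝ X),
      bladeOf f ≠ 0 ∧ M = bladeOf f * N ∧ N ∈ extSub V ∧ span ℝ (Set.range f) = isp M := by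
  obtain ⟨n, b, P, hP, hPc⟩ := exists_basis_span_image_eq_of_isCompl hV
  obtain ⟨N, hN, hMN⟩ := exists_eq_basis_mul_of_forall_ι_mul_eq_zero b (P := P)
    fun i hi => (hP ▸ subset_span ⟨i, hi, rfl⟩ : b i ∈ isp M)
  rw [basis_eq_bladeOf] at hMN
  refine ⟨P.card, b ∘ P.orderEmbOfFin rfl, N, ?_, hMN, ?_, ?_⟩
  · rw [← basis_eq_bladeOf]
    exact b.ExteriorAlgebra.ne_zero P
  · rw [← extSub_span_image_compl_eq, hPc] at hN
    exact hN
  · rw [Set.range_comp, Finset.range_orderEmbOfFin, hP]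

end Factorization

theorem maximal_tight_factorization_general {X : Type*} [NormedAddCommGroup X]
    [InnerProductSpace ℝ X] [FiniteDimensional ℝ X]
    (innE : ExteriorAlgebra ℝ X →ₗ[ℝ] ExteriorAlgebra ℝ X →ₗ[ℝ] ℝ)
    (lcontr : ExteriorAlgebra ℝ X →ₗ[ℝ] ExteriorAlgebra ℝ X →ₗ[ℝ] ExteriorAlgebra ℝ X)
    (hinn : InnerOK innE) (hc : ContrOK innE lcontr)
    (M : ExteriorAlgebra ℝ X)
    (V : Submodule ℝ X) (hV : IsCompl (isp M) V) :
    -- existence of a maximal tight blade factorization with N ∈ ⋀V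
    (∃ (c : ℝ) (p : ℕ) (f : Fin p → X) (N : ExteriorAlgebra ℝ X),
      c • bladeOf f ≠ 0 ∧ M = (c • bladeOf f) * N ∧ N ∈ extSub V ∧
      Disjoint (osp lcontr N) (Submodule.span ℝ (Set.range f)) ∧
      Submodule.span ℝ (Set.range f) = isp M) ∧
    -- uniqueness up to scalars
    (∀ (c : ℝ) (p : ℕ) (f : Fin p → X) (N : ExteriorAlgebra ℝ X)
        (c' : ℝ) (p' : ℕ) (f' : Fin p' → X) (N' : ExteriorAlgebra ℝ X),
      c • bladeOf f ≠ 0 → M = (c • bladeOf f) * N → N ∈ extSub V →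
      Disjoint (osp lcontr N) (Submodule.span ℝ (Set.range f)) →
      Submodule.span ℝ (Set.range f) = isp M →
      c' • bladeOf f' ≠ 0 → M = (c' • bladeOf f') * N' → N' ∈ extSub V →
      Disjoint (osp lcontr N') (Submodule.span ℝ (Set.range f')) →
      Submodule.span ℝ (Set.range f') = isp M →
      ∃ lam : ℝ, lam ≠ 0 ∧ c' • bladeOf f' = lam • (c • bladeOf f) ∧
        N' = lam⁻¹ • N) := by
  refine ⟨?_, fun c p f N c' p' f' N' hB hMN hN _ hspan hB' hMN' hN' _ hspan' => ?_⟩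
  · obtain ⟨p, f, N, hB, hMN, hN, hspan⟩ := exists_bladeOf_mul_eq_of_isCompl_isp hV
    refine ⟨1, p, f, N, by rwa [one_smul], by rwa [one_smul], hN, ?_, hspan⟩
    rw [hspan]
    exact hV.disjoint.symm.mono_left (osp_le_of_mem_extSub hinn hc hN)
  have hc0 : c ≠ 0 := left_ne_zero_of_smul hB
  obtain ⟨d, hd⟩ := exists_bladeOf_eq_smul_of_span_eq
    (linearIndependent_of_bladeOf_ne_zero (right_ne_zero_of_smul hB))
    (linearIndependent_of_bladeOf_ne_zero (right_ne_zero_of_smul hB')) (hspan'.trans hspan.symm)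
  set lam := c' * d / c
  have hlam : c' • bladeOf f' = lam • c • bladeOf f := by
    rw [hd, smul_smul, smul_smul, div_mul_cancel₀ _ hc0]
  have hlam0 : lam ≠ 0 := left_ne_zero_of_smul (hlam ▸ hB')
  have hK : bladeOf f * (N - lam • N') = 0 := by
    refine (smul_eq_zero.1 ?_).resolve_left hc0
    rw [← smul_mul_assoc, mul_sub, ← hMN, mul_smul_comm, ← smul_mul_assoc, ← hlam, ← hMN',
      sub_self]
  have hNN := eq_zero_of_bladeOf_mul_eq_zero (right_ne_zero_of_smul hB) (hspan ▸ hV)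
    (sub_mem hN (Subalgebra.smul_mem _ hN' lam)) hK
  rw [sub_eq_zero] at hNN
  exact ⟨lam, hlam0, hlam, by rw [hNN, inv_smul_smul₀ hlam0]⟩

/-- Existence and uniqueness up to scalars of the maximal tight
blade factorization `M = B ∧ N` with `N ∈ ⋀V`, for each complement `V` of `isp M`. -/
theorem maximal_tight_factorization {X : Type*} [NormedAddCommGroup X]
    [InnerProductSpace ℝ X] [FiniteDimensional ℝ X]
    (innE : ExteriorAlgebra ℝ X →ₗ[ℝ] ExteriorAlgebra ℝ X →ₗ[ℝ] ℝ)
    (lcontr : ExteriorAlgebra ℝ X →ₗ[ℝ] ExteriorAlgebra ℝ X →ₗ[ℝ] ExteriorAlgebra ℝ X)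
    (hinn : InnerOK innE) (hc : ContrOK innE lcontr)
    (M : ExteriorAlgebra ℝ X) (hM0 : M ≠ 0)
    (V : Submodule ℝ X) (hV : IsCompl (isp M) V) :
    -- existence of a maximal tight blade factorization with N ∈ ⋀V
    (∃ (c : ℝ) (p : ℕ) (f : Fin p → X) (N : ExteriorAlgebra ℝ X),
      c • bladeOf f ≠ 0 ∧ M = (c • bladeOf f) * N ∧ N ∈ extSub V ∧
      Disjoint (osp lcontr N) (Submodule.span ℝ (Set.range f)) ∧
      Submodule.span ℝ (Set.range f) = isp M) ∧
    -- uniqueness up to scalars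
    (∀ (c : ℝ) (p : ℕ) (f : Fin p → X) (N : ExteriorAlgebra ℝ X)
        (c' : ℝ) (p' : ℕ) (f' : Fin p' → X) (N' : ExteriorAlgebra ℝ X),
      c • bladeOf f ≠ 0 → M = (c • bladeOf f) * N → N ∈ extSub V →
      Disjoint (osp lcontr N) (Submodule.span ℝ (Set.range f)) →
      Submodule.span ℝ (Set.range f) = isp M →
      c' • bladeOf f' ≠ 0 → M = (c' • bladeOf f') * N' → N' ∈ extSub V →
      Disjoint (osp lcontr N') (Submodule.span ℝ (Set.range f')) →
      Submodule.span ℝ (Set.range f') = isp M →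
      ∃ lam : ℝ, lam ≠ 0 ∧ c' • bladeOf f' = lam • (c • bladeOf f) ∧
        N' = lam⁻¹ • N) :=
  maximal_tight_factorization_general innE lcontr hinn hc M V hV

end
end
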